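/- Let n ≥ 1, let ψ be a positive semidefinite n×n complex matrix, let φ be a positive definite n×n complex matrix, and let α > 1. Then the supremum, over all n×n density matrices σ, of Tr[σ^{(α−1)/α} · ψ^{1/2} φ^{(1−α)/α} ψ^{1/2}] equals (Tr[(φ^{(1−α)/(2α)} ψ φ^{(1−α)/(2α)})^α])^{1/α}. (This identifies the Araki–Masuda variational expression for the sandwiched Rényi divergence of order α > 1 with the closed trace formula, as in Theorem 2.4(i) of the paper.) -/

import Mathlib

/-! Put `M = φ^{(1-α)/(2α)} ψ^{1/2}`. The operator in the variational expression is `X = M†M`,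
the one in the closed formula is `MM†`, and these have the same characteristic polynomial, hence
the same trace of `α`-th powers.

If `σ` has eigenvalues `sᵢ` with eigenbasis `(uᵢ)` and `X` has eigenvalues `xⱼ` with eigenbasis
`(vⱼ)`, then `Tr[σ^{1-1/α} X] = ∑ᵢⱼ |⟨uᵢ, vⱼ⟩|² sᵢ^{1-1/α} xⱼ`. The weights `|⟨uᵢ, vⱼ⟩|²` form a
doubly stochastic matrix, so Hölder's inequality with exponents `α/(α-1)` and `α` bounds this by
`(∑ sᵢ)^{1-1/α} (∑ xⱼ^α)^{1/α} = (Tr X^α)^{1/α}`. Equality holds for `σ = X^α / Tr X^α`, and for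
every `σ` when `X = 0`. -/

open Matrix
open scoped ComplexOrder

/-- Real power of a matrix, defined via the spectral decomposition when the matrix is
Hermitian (applying the real power function to the eigenvalues), and `0` otherwise. -/
noncomputable def mpow {n : ℕ} (A : Matrix (Fin n) (Fin n) ℂ) (r : ℝ) :
    Matrix (Fin n) (Fin n) ℂ :=
  if hA : A.IsHermitian then
    (hA.eigenvectorUnitary : Matrix (Fin n) (Fin n) ℂ) *
      Matrix.diagonal (fun i => ((hA.eigenvalues i ^ r : ℝ) : ℂ)) *
      (star hA.eigenvectorUnitary : Matrix (Fin n) (Fin n) ℂ)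
  else 0

namespace Matrix

variable {𝕜 : Type*} [RCLike 𝕜] {n : Type*} [Fintype n] [DecidableEq n]

lemma norm_sq_mem_doublyStochastic_of_mem_unitaryGroup {U : Matrix n n 𝕜}
    (hU : U ∈ unitaryGroup n 𝕜) : (of fun i j => ‖U i j‖ ^ 2) ∈ doublyStochastic ℝ n := by
  have row (i : n) : ∑ j, ‖U i j‖ ^ 2 = 1 := by
    have h := congr_fun₂ (mem_unitaryGroup_iff.mp hU) i i
    simp only [mul_apply, star_apply, RCLike.star_def, RCLike.mul_conj, one_apply_eq] at h
    exact_mod_cast h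
  have col (j : n) : ∑ i, ‖U i j‖ ^ 2 = 1 := by
    have h := congr_fun₂ (mem_unitaryGroup_iff'.mp hU) j j
    simp only [mul_apply, star_apply, RCLike.star_def, RCLike.conj_mul, one_apply_eq] at h
    exact_mod_cast h
  exact mem_doublyStochastic_iff_sum.mpr
    ⟨fun _ _ => by simp only [of_apply]; positivity, row, col⟩

lemma sum_mul_mul_le_of_mem_doublyStochastic {M : Matrix n n ℝ} (hM : M ∈ doublyStochastic ℝ n)
    {a b : n → ℝ} (ha : ∀ i, 0 ≤ a i) (hb : ∀ j, 0 ≤ b j) {p q : ℝ} (hpq : p.HolderConjugate q) :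
    ∑ i, ∑ j, a i * b j * M i j ≤ (∑ i, a i ^ p) ^ (1 / p) * (∑ j, b j ^ q) ^ (1 / q) := by
  have hM₀ (i j : n) : 0 ≤ M i j := nonneg_of_mem_doublyStochastic hM
  have holder := Real.inner_le_Lp_mul_Lq_of_nonneg (Finset.univ : Finset (n × n))
    (f := fun ij => M ij.1 ij.2 ^ (1 / p) * a ij.1)
    (g := fun ij => M ij.1 ij.2 ^ (1 / q) * b ij.2) hpq
    (fun _ _ => mul_nonneg (Real.rpow_nonneg (hM₀ _ _) _) (ha _))
    (fun _ _ => mul_nonneg (Real.rpow_nonneg (hM₀ _ _) _) (hb _))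
  simp only [Fintype.sum_prod_type] at holder
  convert holder using 3
  · rw [mul_mul_mul_comm, ← Real.rpow_add' (hM₀ _ _) (by rw [hpq.one_div_add_one_div]; norm_num),
      hpq.one_div_add_one_div, div_one, Real.rpow_one]
    ring
  · simp only [Real.mul_rpow (Real.rpow_nonneg (hM₀ _ _) _) (ha _), ← Real.rpow_mul (hM₀ _ _),
      one_div_mul_cancel hpq.ne_zero, Real.rpow_one, ← Finset.sum_mul,
      sum_row_of_mem_doublyStochastic hM, one_mul]
  · simp only [Real.mul_rpow (Real.rpow_nonneg (hM₀ _ _) _) (hb _), ← Real.rpow_mul (hM₀ _ _),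
      one_div_mul_cancel hpq.symm.ne_zero, Real.rpow_one]
    rw [Finset.sum_comm]
    simp only [← Finset.sum_mul, sum_col_of_mem_doublyStochastic hM, one_mul]

lemma trace_unitary_conj_diagonal_mul {U : Matrix n n 𝕜} (hU : U ∈ unitaryGroup n 𝕜)
    (V : Matrix n n 𝕜) (d e : n → 𝕜) :
    (U * diagonal d * star U * (V * diagonal e * star V)).trace =
      ∑ i, ∑ j, d i * e j * (‖(star U * V) i j‖ ^ 2 : ℝ) := by
  have hconj : U * diagonal d * star U * (V * diagonal e * star V) =
      U * (diagonal d * (star U * V) * diagonal e * star (star U * V)) * star U := by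
    simp only [star_mul, star_star, mul_assoc, mem_unitaryGroup_iff.mp hU, mul_one]
  rw [hconj, trace_mul_cycle, mem_unitaryGroup_iff'.mp hU, one_mul]
  generalize star U * V = W
  refine Finset.sum_congr rfl fun i _ => ?_
  rw [diag_apply, mul_apply]
  refine Finset.sum_congr rfl fun j _ => ?_
  rw [mul_diagonal, diagonal_mul, star_apply, RCLike.star_def, RCLike.ofReal_pow,
    ← RCLike.mul_conj]
  ring

namespace IsHermitian

variable {A B : Matrix n n 𝕜}

/-- The transition probabilities `|⟨uᵢ, vⱼ⟩|²` between the eigenbases of `A` and `B`. -/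
noncomputable def overlap (hA : A.IsHermitian) (hB : B.IsHermitian) : Matrix n n ℝ :=
  of fun i j => ‖(star (hA.eigenvectorUnitary : Matrix n n 𝕜) * hB.eigenvectorUnitary) i j‖ ^ 2

lemma overlap_mem_doublyStochastic (hA : A.IsHermitian) (hB : B.IsHermitian) :
    hA.overlap hB ∈ doublyStochastic ℝ n :=
  norm_sq_mem_doublyStochastic_of_mem_unitaryGroup
    (mul_mem (Unitary.star_mem hA.eigenvectorUnitary.2) hB.eigenvectorUnitary.2)

lemma trace_mul_eq_sum_overlap (hA : A.IsHermitian) (hB : B.IsHermitian) :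
    (A * B).trace =
      ∑ i, ∑ j, ((hA.eigenvalues i * hB.eigenvalues j * hA.overlap hB i j : ℝ) : 𝕜) := by
  conv_lhs => rw [hA.spectral_theorem, hB.spectral_theorem]
  simp only [Unitary.conjStarAlgAut_apply]
  rw [trace_unitary_conj_diagonal_mul hA.eigenvectorUnitary.2]
  simp [overlap]

lemma trace_cfc (hA : A.IsHermitian) (f : ℝ → ℝ) :
    (cfc f A).trace = ∑ i, (f (hA.eigenvalues i) : 𝕜) := by
  rw [hA.cfc_eq, IsHermitian.cfc, Unitary.conjStarAlgAut_apply, trace_mul_cycle,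
    Unitary.star_mul_self_of_mem hA.eigenvectorUnitary.2, one_mul, trace_diagonal]
  rfl

lemma trace_cfc_cfc (hA : A.IsHermitian) (f g : ℝ → ℝ) :
    (cfc g (cfc f A)).trace = ∑ i, (g (f (hA.eigenvalues i)) : 𝕜) := by
  rw [← cfc_comp g f A hA.isSelfAdjoint ((finite_real_spectrum.image f).continuousOn g)
    (finite_real_spectrum.continuousOn f), hA.trace_cfc]
  rfl

end IsHermitian

lemma trace_cfc_conjTranspose_mul_self (M : Matrix n n 𝕜) (f : ℝ → ℝ) :
    (cfc f (Mᴴ * M)).trace = (cfc f (M * Mᴴ)).trace := by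
  have hMM := isHermitian_conjTranspose_mul_self M
  have hMM' := isHermitian_mul_conjTranspose_self M
  have hspec : hMM.eigenvalues = hMM'.eigenvalues :=
    (hMM.eigenvalues_eq_eigenvalues_iff hMM').mpr (charpoly_mul_comm _ _)
  rw [hMM.trace_cfc, hMM'.trace_cfc, hspec]

section MatrixOrder

open scoped MatrixOrder

lemma PosSemidef.nonneg_of_mem_spectrum {A : Matrix n n 𝕜} (hA : A.PosSemidef) {t : ℝ}
    (ht : t ∈ spectrum ℝ A) : 0 ≤ t :=
  spectrum_nonneg_of_nonneg (nonneg_iff_posSemidef.mpr hA) ht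

lemma posSemidef_cfc {A : Matrix n n 𝕜} {f : ℝ → ℝ} (hf : ∀ t ∈ spectrum ℝ A, 0 ≤ f t) :
    (cfc f A).PosSemidef :=
  nonneg_iff_posSemidef.mp (cfc_nonneg hf)

end MatrixOrder

lemma PosSemidef.re_trace_mul_le {A B : Matrix n n 𝕜} (hA : A.PosSemidef) (hB : B.PosSemidef)
    {p q : ℝ} (hpq : p.HolderConjugate q) :
    RCLike.re (A * B).trace ≤
      RCLike.re (cfc (fun t : ℝ => t ^ p) A).trace ^ (1 / p) *
        RCLike.re (cfc (fun t : ℝ => t ^ q) B).trace ^ (1 / q) := by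
  rw [hA.1.trace_mul_eq_sum_overlap hB.1, hA.1.trace_cfc, hB.1.trace_cfc]
  simp only [← RCLike.ofReal_sum, RCLike.ofReal_re]
  exact sum_mul_mul_le_of_mem_doublyStochastic (hA.1.overlap_mem_doublyStochastic hB.1)
    hA.eigenvalues_nonneg hB.eigenvalues_nonneg hpq

section Variational

variable {σ X : Matrix n n 𝕜} {α : ℝ}

lemma re_trace_rpow_mul_le (hσ : σ.PosSemidef) (hσ₁ : σ.trace = 1) (hX : X.PosSemidef)
    (hα : 1 < α) :
    RCLike.re (cfc (fun t : ℝ => t ^ ((α - 1) / α)) σ * X).trace ≤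
      RCLike.re (cfc (fun t : ℝ => t ^ α) X).trace ^ (1 / α) := by
  have hpq : (α / (α - 1)).HolderConjugate α :=
    ((Real.holderConjugate_iff_eq_conjExponent hα).mpr rfl).symm
  have hσr : (cfc (fun t : ℝ => t ^ ((α - 1) / α)) σ).PosSemidef :=
    posSemidef_cfc fun t ht => Real.rpow_nonneg (hσ.nonneg_of_mem_spectrum ht) _
  have hσ_trace : RCLike.re (cfc (fun t : ℝ => t ^ (α / (α - 1)))
      (cfc (fun t : ℝ => t ^ ((α - 1) / α)) σ)).trace = 1 := by
    have hexp : (α - 1) / α * (α / (α - 1)) = 1 := by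
      field_simp [(by linarith : α - 1 ≠ 0), (by linarith : α ≠ 0)]
    simp only [hσ.1.trace_cfc_cfc, ← Real.rpow_mul (hσ.eigenvalues_nonneg _), hexp,
      Real.rpow_one, ← hσ.1.trace_eq_sum_eigenvalues, hσ₁, RCLike.one_re]
  calc _ ≤ _ := hσr.re_trace_mul_le hX hpq
    _ = _ := by rw [hσ_trace, Real.one_rpow, one_mul]

lemma exists_re_trace_rpow_mul_eq [Nonempty n] (hX : X.PosSemidef) (hα : 1 < α) :
    ∃ σ : Matrix n n 𝕜, σ.PosSemidef ∧ σ.trace = 1 ∧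
      RCLike.re (cfc (fun t : ℝ => t ^ ((α - 1) / α)) σ * X).trace =
        RCLike.re (cfc (fun t : ℝ => t ^ α) X).trace ^ (1 / α) := by
  have hα₀ : α ≠ 0 := by linarith
  have hx := hX.eigenvalues_nonneg
  rw [hX.1.trace_cfc, ← RCLike.ofReal_sum, RCLike.ofReal_re]
  set T := ∑ j, hX.1.eigenvalues j ^ α
  obtain hT | hT :=
    (show 0 ≤ T from Finset.sum_nonneg fun j _ => Real.rpow_nonneg (hx j) α).eq_or_lt
  · have hX₀ : X = 0 := by
      refine hX.1.eigenvalues_eq_zero_iff.mp (funext fun j => ?_)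
      refine (Real.rpow_eq_zero (hx j) hα₀).mp ?_
      exact (Finset.sum_eq_zero_iff_of_nonneg fun j _ => Real.rpow_nonneg (hx j) α).mp hT.symm j
        (Finset.mem_univ j)
    obtain ⟨i⟩ := ‹Nonempty n›
    refine ⟨diagonal (Pi.single i 1), posSemidef_diagonal_iff.mpr fun j => ?_, ?_, ?_⟩
    · by_cases h : j = i <;> simp [h]
    · simp [trace_diagonal]
    · rw [hX₀, mul_zero, trace_zero, map_zero, ← hT, Real.zero_rpow (one_div_ne_zero hα₀)]
  · have hσX : cfc (fun t : ℝ => t ^ ((α - 1) / α)) (cfc (fun t : ℝ => t ^ α / T) X) * X =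
        cfc (fun t : ℝ => (t ^ α / T) ^ ((α - 1) / α) * t) X := by
      rw [← cfc_comp _ _ X hX.1.isSelfAdjoint ((finite_real_spectrum.image _).continuousOn _)
        (finite_real_spectrum.continuousOn _)]
      conv_lhs => arg 2; rw [← cfc_id' ℝ X hX.1.isSelfAdjoint]
      rw [← cfc_mul _ _ X (finite_real_spectrum.continuousOn _)
        (finite_real_spectrum.continuousOn _)]
      rfl
    have hterm (x : ℝ) (hx : 0 ≤ x) :
        (x ^ α / T) ^ ((α - 1) / α) * x = x ^ α / T ^ ((α - 1) / α) := by
      rw [Real.div_rpow (Real.rpow_nonneg hx α) hT.le, ← Real.rpow_mul hx,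
        mul_div_cancel₀ _ hα₀, div_mul_eq_mul_div, ← Real.rpow_add_one' hx (by simpa using hα₀),
        sub_add_cancel]
    have hexp : 1 - (α - 1) / α = 1 / α := by field_simp; ring
    refine ⟨cfc (fun t : ℝ => t ^ α / T) X, posSemidef_cfc fun t ht =>
      div_nonneg (Real.rpow_nonneg (hX.nonneg_of_mem_spectrum ht) α) hT.le, ?_, ?_⟩
    · rw [hX.1.trace_cfc, ← RCLike.ofReal_sum, ← Finset.sum_div, div_self hT.ne',
        RCLike.ofReal_one]
    · rw [hσX, hX.1.trace_cfc, ← RCLike.ofReal_sum, RCLike.ofReal_re,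
        Finset.sum_congr rfl fun j _ => hterm _ (hx j), ← Finset.sum_div,
        ← Real.rpow_one_sub' hT.le (hexp ▸ one_div_ne_zero hα₀), hexp]

theorem isGreatest_re_trace_rpow_mul [Nonempty n] (hX : X.PosSemidef) (hα : 1 < α) :
    IsGreatest {x : ℝ | ∃ σ : Matrix n n 𝕜, σ.PosSemidef ∧ σ.trace = 1 ∧
        x = RCLike.re (cfc (fun t : ℝ => t ^ ((α - 1) / α)) σ * X).trace}
      (RCLike.re (cfc (fun t : ℝ => t ^ α) X).trace ^ (1 / α)) := by
  obtain ⟨σ, hσ, hσ₁, hval⟩ := exists_re_trace_rpow_mul_eq hX hα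
  exact ⟨⟨σ, hσ, hσ₁, hval.symm⟩,
    fun _ ⟨σ, hσ, hσ₁, hx⟩ => hx ▸ re_trace_rpow_mul_le hσ hσ₁ hX hα⟩

end Variational

end Matrix

section mpow

variable {n : ℕ} {A : Matrix (Fin n) (Fin n) ℂ}

lemma mpow_eq_cfc (hA : A.IsHermitian) (r : ℝ) : mpow A r = cfc (fun t : ℝ => t ^ r) A := by
  rw [hA.cfc_eq, mpow, dif_pos hA, IsHermitian.cfc]
  rfl

lemma isHermitian_mpow (A : Matrix (Fin n) (Fin n) ℂ) (r : ℝ) : (mpow A r).IsHermitian := by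
  by_cases hA : A.IsHermitian
  · rw [mpow_eq_cfc hA]
    exact cfc_predicate _ A
  · rw [mpow, dif_neg hA]
    exact isHermitian_zero

lemma mpow_mul_mpow (hA : A.PosSemidef) {r s : ℝ} (h : r + s ≠ 0) :
    mpow A r * mpow A s = mpow A (r + s) := by
  rw [mpow_eq_cfc hA.1, mpow_eq_cfc hA.1, mpow_eq_cfc hA.1,
    ← cfc_mul _ _ A (finite_real_spectrum.continuousOn _) (finite_real_spectrum.continuousOn _)]
  exact cfc_congr fun t ht => (Real.rpow_add' (hA.nonneg_of_mem_spectrum ht) h).symm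

lemma mpow_one (hA : A.IsHermitian) : mpow A 1 = A := by
  simp only [mpow_eq_cfc hA, Real.rpow_one]
  exact cfc_id' ℝ A hA.isSelfAdjoint

end mpow

theorem araki_masuda_variational_sup {n : ℕ} (hn : 1 ≤ n)
    (ψ φ : Matrix (Fin n) (Fin n) ℂ) (hψ : ψ.PosSemidef) (hφ : φ.PosDef)
    (α : ℝ) (hα : 1 < α) :
    sSup {x : ℝ | ∃ σ : Matrix (Fin n) (Fin n) ℂ, σ.PosSemidef ∧ σ.trace = 1 ∧
        x = (Matrix.trace (mpow σ ((α - 1) / α) *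
          (mpow ψ (1 / 2) * mpow φ ((1 - α) / α) * mpow ψ (1 / 2)))).re} =
      ((Matrix.trace (mpow (mpow φ ((1 - α) / (2 * α)) * ψ * mpow φ ((1 - α) / (2 * α))) α)).re)
        ^ (1 / α) := by
  set B := mpow ψ (1 / 2)
  set C := mpow φ ((1 - α) / (2 * α))
  have hB : Bᴴ = B := isHermitian_mpow ψ _
  have hC : Cᴴ = C := isHermitian_mpow φ _
  have hBB : B * B = ψ := by rw [mpow_mul_mpow hψ (by norm_num), add_halves, mpow_one hψ.1]
  have hCC : C * C = mpow φ ((1 - α) / α) := by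
    have hr : (1 - α) / (2 * α) + (1 - α) / (2 * α) = (1 - α) / α := by ring
    rw [mpow_mul_mpow hφ.posSemidef (hr ▸ div_ne_zero (by linarith) (by linarith)), hr]
  have hX : B * mpow φ ((1 - α) / α) * B = (C * B)ᴴ * (C * B) := by
    rw [conjTranspose_mul, hB, hC, ← hCC]
    simp only [mul_assoc]
  have hY : C * ψ * C = C * B * (C * B)ᴴ := by
    rw [conjTranspose_mul, hB, hC, ← hBB]
    simp only [mul_assoc]
  have hset (X : Matrix (Fin n) (Fin n) ℂ) :
      {x : ℝ | ∃ σ : Matrix (Fin n) (Fin n) ℂ, σ.PosSemidef ∧ σ.trace = 1 ∧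
        x = (mpow σ ((α - 1) / α) * X).trace.re} =
      {x : ℝ | ∃ σ : Matrix (Fin n) (Fin n) ℂ, σ.PosSemidef ∧ σ.trace = 1 ∧
        x = RCLike.re (cfc (fun t : ℝ => t ^ ((α - 1) / α)) σ * X).trace} :=
    Set.ext fun x => exists_congr fun σ => and_congr_right fun hσ => by
      rw [mpow_eq_cfc hσ.1]; rfl
  have : Nonempty (Fin n) := ⟨⟨0, hn⟩⟩
  rw [hset, hX, hY, mpow_eq_cfc (isHermitian_mul_conjTranspose_self _),
    ← trace_cfc_conjTranspose_mul_self]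
  exact (isGreatest_re_trace_rpow_mul (posSemidef_conjTranspose_mul_self _) hα).csSup_eq
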